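/- arXiv:1705.09987 — 8 statements merged into one kernel-verified Lean document; each statement's English description precedes it below -/
import Mathlib

section
/- Let V = V_1 ⊕ ... ⊕ V_n with V_i = F_q^{k_i}, and let d be the chain poset block metric d(u,v) = max{ i : u_i ≠ v_i } (and 0 if u = v). Given for each i a map F_i : V_i × V_{i+1} × ... × V_n → V_i such that for every fixed (v_{i+1},...,v_n) the map v_i ↦ F_i(v_i, v_{i+1},...,v_n) is a bijection of V_i, the map T(v_1,...,v_n) = (F_1(v_1,...,v_n), F_2(v_2,...,v_n), ..., F_n(v_n)) is a bijection of V preserving d. -/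
/-- The chain poset block metric: `d(u,v) = max{ i : u_i ≠ v_i }` (1-indexed), `0` if `u = v`. -/
def chainDist {F : Type*} [DecidableEq F] {n : ℕ} {k : Fin n → ℕ}
    (u v : ∀ i : Fin n, Fin (k i) → F) : ℕ :=
  (Finset.univ.filter fun i => u i ≠ v i).sup fun i => (i : ℕ) + 1

theorem stmt0 {F : Type*} [Field F] [Fintype F] [DecidableEq F] {n : ℕ} {k : Fin n → ℕ}
    (Fm : ∀ i : Fin n, (∀ j : Fin n, Fin (k j) → F) → (Fin (k i) → F))
    (hdep : ∀ i (u v : ∀ j : Fin n, Fin (k j) → F),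
      (∀ j, i ≤ j → u j = v j) → Fm i u = Fm i v)
    (hbij : ∀ i (v : ∀ j : Fin n, Fin (k j) → F),
      Function.Bijective fun x : Fin (k i) → F => Fm i (Function.update v i x)) :
    Function.Bijective (fun (v : ∀ j : Fin n, Fin (k j) → F) (i : Fin n) => Fm i v) ∧
    ∀ u v : ∀ j : Fin n, Fin (k j) → F,
      chainDist (fun i => Fm i u) (fun i => Fm i v) = chainDist u v := by
  classical
  -- tail injectivity
  have tail_inj : ∀ (u v : ∀ j : Fin n, Fin (k j) → F) (m : ℕ),
      (∀ j : Fin n, m ≤ (j : ℕ) → Fm j u = Fm j v) →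
      ∀ j : Fin n, m ≤ (j : ℕ) → u j = v j := by
    intro u v m h
    have key : ∀ t (j : Fin n), n - (j : ℕ) ≤ t → m ≤ (j : ℕ) → u j = v j := by
      intro t
      induction t with
      | zero => intro j hj _; have := j.isLt; omega
      | succ t ih =>
        intro j hj hm
        have tail : ∀ j' : Fin n, (j : ℕ) < (j' : ℕ) → u j' = v j' := by
          intro j' hj'
          exact ih j' (by omega) (by omega)
        have h1 : Fm j u = Fm j (Function.update v j (u j)) := by
          apply hdep
          intro j2 hj2
          by_cases hje : j2 = j
          · subst hje; simp
          · have hlt : (j : ℕ) < (j2 : ℕ) :=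
              lt_of_le_of_ne hj2 (fun hc => hje (Fin.ext hc.symm))
            rw [Function.update_of_ne hje]
            exact tail j2 hlt
        have h2 : Fm j (Function.update v j (v j)) = Fm j v := by
          rw [Function.update_eq_self]
        have heq : (fun x : Fin (k j) → F => Fm j (Function.update v j x)) (u j) =
            (fun x : Fin (k j) → F => Fm j (Function.update v j x)) (v j) := by
          simp only []
          rw [← h1, h2, h j hm]
        exact (hbij j v).1 heq
    intro j hm
    exact key n j (by omega) hm
  have hinj : Function.Injective
      (fun (v : ∀ j : Fin n, Fin (k j) → F) (i : Fin n) => Fm i v) := by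
    intro u v huv
    funext j
    exact tail_inj u v 0 (fun i _ => congrFun huv i) j (Nat.zero_le _)
  constructor
  · exact Finite.injective_iff_bijective.mp hinj
  · intro u v
    apply le_antisymm
    · apply Finset.sup_le
      intro i hi
      simp only [Finset.mem_filter, Finset.mem_univ, true_and] at hi
      by_contra hlt
      push_neg at hlt
      apply hi
      apply hdep
      intro j hj
      by_contra hne
      have h1 : (j : ℕ) + 1 ≤ chainDist u v := by
        apply Finset.le_sup (f := fun i : Fin n => (i : ℕ) + 1)
        simp [hne]
      have h2 : (i : ℕ) ≤ (j : ℕ) := hj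
      omega
    · apply Finset.sup_le
      intro i hi
      simp only [Finset.mem_filter, Finset.mem_univ, true_and] at hi
      by_contra hlt
      push_neg at hlt
      apply hi
      apply tail_inj u v (i : ℕ) _ i le_rfl
      intro j hj
      by_contra hne
      have h1 : (j : ℕ) + 1 ≤ chainDist (fun i => Fm i u) (fun i => Fm i v) := by
        apply Finset.le_sup (f := fun i : Fin n => (i : ℕ) + 1)
        simp [hne]
      omega
end

section
/- Let V = V_1 ⊕ ... ⊕ V_n with V_i = F_q^{k_i} and d the chain poset block metric. If T : V → V is a distance-preserving bijection, then the j-th component of T(v_1,...,v_n) depends only on (v_j, v_{j+1}, ..., v_n); that is, there exist functions F_j : V_j × ... × V_n → V_j with T(v_1,...,v_n) = (F_1(v_1,...,v_n), ..., F_n(v_n)). -/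
/-- The `j`-th component of a symmetry of the chain poset block space depends only
on the coordinates `j, j+1, …, n`. -/
theorem stmt1 {F : Type*} [Field F] [Fintype F] [DecidableEq F] {n : ℕ} {k : Fin n → ℕ}
    (T : (∀ j : Fin n, Fin (k j) → F) → (∀ j : Fin n, Fin (k j) → F))
    (hTbij : Function.Bijective T)
    (hTiso : ∀ u v, chainDist (T u) (T v) = chainDist u v) :
    ∀ (j : Fin n) (u v : ∀ l : Fin n, Fin (k l) → F),
      (∀ l, j ≤ l → u l = v l) → T u j = T v j := by
  intro j u v h
  by_contra hne
  have h1 : chainDist u v ≤ (j : ℕ) := by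
    apply Finset.sup_le
    intro i hi
    simp only [Finset.mem_filter, Finset.mem_univ, true_and] at hi
    have hij : ¬ (j ≤ i) := fun hji => hi (h i hji)
    have : (i : ℕ) < (j : ℕ) := Fin.lt_iff_val_lt_val.mp (lt_of_not_ge hij)
    omega
  have h2 : (j : ℕ) + 1 ≤ chainDist (T u) (T v) := by
    apply Finset.le_sup (f := fun i : Fin n => (i : ℕ) + 1)
    simp [hne]
  rw [hTiso] at h2
  omega
end

section
/- Let V = V_1 ⊕ ... ⊕ V_n with V_i = F_q^{k_i} and d the chain poset block metric. If T : V → V is a distance-preserving bijection with components T(v) = (F_1(v_1,...,v_n),...,F_n(v_n)), then for each i and each fixed (v_{i+1},...,v_n), the map v_i ↦ F_i(v_i, v_{i+1},...,v_n) is a bijection of V_i. -/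
/-- For a symmetry `T` of the chain poset block space, each diagonal component map
`v_i ↦ F_i(v_i, v_{i+1}, …, v_n) = T(update v i v_i)_i` is a bijection of `V_i`. -/
theorem stmt2 {F : Type*} [Field F] [Fintype F] [DecidableEq F] {n : ℕ} {k : Fin n → ℕ}
    (T : (∀ j : Fin n, Fin (k j) → F) → (∀ j : Fin n, Fin (k j) → F))
    (hTbij : Function.Bijective T)
    (hTiso : ∀ u v, chainDist (T u) (T v) = chainDist u v) :
    ∀ (i : Fin n) (v : ∀ l : Fin n, Fin (k l) → F),
      Function.Bijective fun x : Fin (k i) → F => T (Function.update v i x) i := by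
  intro i v
  rw [← Finite.injective_iff_bijective]
  intro x x' h
  by_contra hxx
  -- chainDist of the updated vectors is i+1
  have hd : chainDist (Function.update v i x) (Function.update v i x') = (i : ℕ) + 1 := by
    unfold chainDist
    have hfilter : (Finset.univ.filter fun j =>
        Function.update v i x j ≠ Function.update v i x' j) = {i} := by
      ext j
      simp only [Finset.mem_filter, Finset.mem_univ, true_and, Finset.mem_singleton]
      constructor
      · intro hj
        by_contra hji
        simp [Function.update_of_ne hji] at hj
      · intro hj
        subst hj
        simpa using hxx
    rw [hfilter, Finset.sup_singleton]
  have hd2 : chainDist (T (Function.update v i x)) (T (Function.update v i x')) = (i : ℕ) + 1 := by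
    rw [hTiso, hd]
  -- but the sup must be attained, and coordinate i of the images are equal
  unfold chainDist at hd2
  have hne : (Finset.univ.filter fun j =>
      T (Function.update v i x) j ≠ T (Function.update v i x') j).Nonempty := by
    rw [Finset.nonempty_iff_ne_empty]
    intro hempty
    rw [hempty] at hd2
    simp at hd2
  obtain ⟨j, hjmem, hjsup⟩ := Finset.exists_mem_eq_sup _ hne fun j => (j : ℕ) + 1
  rw [hjsup] at hd2
  have hji : j = i := by
    apply Fin.ext
    omega
  subst hji
  simp only [Finset.mem_filter] at hjmem
  exact hjmem.2 h
end

section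
/- The symmetry group of the chain poset block space (V, d), where V = F_q^{k_1} × ... × F_q^{k_n} and d(u,v) = max{ i : u_i ≠ v_i }, has order (q^{k_1}!)^{q^{N-k_1}} · (q^{k_2}!)^{q^{N-k_1-k_2}} · ... · (q^{k_{n-1}}!)^{q} · (q^{k_n}!), where N = k_1 + ... + k_n. -/
/-!
An isometry `T` of the chain metric is the same as a family of permutations `σ i t` of the
`i`-th block, one for each value `t` of the blocks above `i`, acting by
`(T u) i = σ i (u restricted above i) (u i)`: the distance is at most `m` exactly when the vectors
agree from block `m` on, and an isometry must preserve all these agreement relations. Counting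
such families gives `∏ i, (|X i|!) ^ ∏_{j > i} |X j|`.
-/

open Equiv

namespace ChainIsometry

variable {n : ℕ} {X : Fin n → Type*}

def AgreeFrom (m : ℕ) (u v : ∀ i, X i) : Prop :=
  ∀ i : Fin n, m ≤ (i : ℕ) → u i = v i

def upper (i : Fin n) (u : ∀ j, X j) : ∀ j : Set.Ioi i, X j := fun j => u j

noncomputable def extend [∀ j, Nonempty (X j)] (i : Fin n) (t : ∀ j : Set.Ioi i, X j)
    (x : X i) : ∀ j, X j :=
  Function.update (fun j => if h : i < j then t ⟨j, h⟩ else Classical.arbitrary (X j)) i x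

section Extend

variable [∀ j, Nonempty (X j)]

@[simp]
lemma extend_self (i : Fin n) (t : ∀ j : Set.Ioi i, X j) (x : X i) : extend i t x i = x :=
  Function.update_self ..

lemma extend_of_lt {i j : Fin n} (h : i < j) (t : ∀ j : Set.Ioi i, X j) (x : X i) :
    extend i t x j = t ⟨j, h⟩ := by
  rw [extend, Function.update_of_ne h.ne', dif_pos h]

@[simp]
lemma upper_extend (i : Fin n) (t : ∀ j : Set.Ioi i, X j) (x : X i) :
    upper i (extend i t x) = t :=
  funext fun j => extend_of_lt j.2 t x

lemma agreeFrom_extend_extend (i : Fin n) (t : ∀ j : Set.Ioi i, X j) (x y : X i) :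
    AgreeFrom (i + 1) (extend i t x) (extend i t y) := fun j hj => by
  have hij : i < j := Fin.lt_def.mpr (by omega)
  rw [extend_of_lt hij, extend_of_lt hij]

lemma agreeFrom_extend_upper (i : Fin n) (u : ∀ j, X j) :
    AgreeFrom i (extend i (upper i u) (u i)) u := fun j hj => by
  rcases (Fin.le_def.mpr hj).lt_or_eq with hij | rfl
  · exact extend_of_lt hij _ _
  · exact extend_self _ _ _

end Extend

abbrev TriangularFamily (X : Fin n → Type*) : Type _ :=
  ∀ i : Fin n, (∀ j : Set.Ioi i, X j) → Perm (X i)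

lemma card_triangularFamily [∀ i, Finite (X i)] :
    Nat.card (TriangularFamily X) =
      ∏ i, (Nat.card (X i)).factorial ^ ∏ j ∈ Finset.Ioi i, Nat.card (X j) := by
  rw [Nat.card_pi]
  refine Finset.prod_congr rfl fun i _ => ?_
  rw [Nat.card_fun, Nat.card_perm, Nat.card_pi, Finset.prod_set_coe (f := fun j => Nat.card (X j)),
    Set.toFinset_Ioi]

namespace TriangularFamily

def toFun (σ : TriangularFamily X) (u : ∀ i, X i) : ∀ i, X i := fun i => σ i (upper i u) (u i)

lemma agreeFrom_toFun_iff (σ : TriangularFamily X) {m : ℕ} {u v : ∀ i, X i} :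
    AgreeFrom m (σ.toFun u) (σ.toFun v) ↔ AgreeFrom m u v := by
  constructor
  · intro h j
    induction j using WellFoundedGT.induction with
    | _ j ih =>
      intro hj
      have hupper : upper j u = upper j v :=
        funext fun j' => ih j' j'.2 (hj.trans (Fin.lt_def.mp j'.2).le)
      have hj' := h j hj
      simp only [toFun, hupper] at hj'
      exact (σ j _).injective hj'
  · intro h j hj
    have hupper : upper j u = upper j v :=
      funext fun j' => h j' (hj.trans (Fin.lt_def.mp j'.2).le)
    simp only [toFun, hupper, h j hj]

lemma toFun_injective (σ : TriangularFamily X) : Function.Injective σ.toFun := fun _ _ h =>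
  funext fun j => σ.agreeFrom_toFun_iff.mp (fun i _ => congrFun h i) j (Nat.zero_le _)

noncomputable def toPerm [∀ i, Finite (X i)] (σ : TriangularFamily X) : Perm (∀ i, X i) :=
  Equiv.ofBijective σ.toFun (Finite.injective_iff_bijective.mp σ.toFun_injective)

end TriangularFamily

def IsChainIsometry (T : Perm (∀ i, X i)) : Prop :=
  ∀ m u v, AgreeFrom m (T u) (T v) ↔ AgreeFrom m u v

lemma TriangularFamily.isChainIsometry_toPerm [∀ i, Finite (X i)] (σ : TriangularFamily X) :
    IsChainIsometry σ.toPerm := fun _ _ _ => σ.agreeFrom_toFun_iff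

namespace IsChainIsometry

variable [∀ i, Nonempty (X i)] {T : Perm (∀ i, X i)}

lemma apply_extend_upper (hT : IsChainIsometry T) (u : ∀ j, X j) (i : Fin n) :
    T (extend i (upper i u) (u i)) i = T u i :=
  (hT i _ _).mpr (agreeFrom_extend_upper i u) i le_rfl

lemma injective_blockMap (hT : IsChainIsometry T) (i : Fin n) (t : ∀ j : Set.Ioi i, X j) :
    Function.Injective fun x => T (extend i t x) i := by
  intro x y hxy
  have hupper : AgreeFrom (i + 1) (T (extend i t x)) (T (extend i t y)) :=
    (hT _ _ _).mpr (agreeFrom_extend_extend i t x y)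
  have hfrom : AgreeFrom i (T (extend i t x)) (T (extend i t y)) := fun j hj => by
    rcases (Fin.le_def.mpr hj).lt_or_eq with hij | rfl
    · exact hupper j (Fin.lt_def.mp hij)
    · exact hxy
  simpa using (hT i _ _).mp hfrom i le_rfl

variable [∀ i, Finite (X i)]

noncomputable def toTriangularFamily (hT : IsChainIsometry T) : TriangularFamily X := fun i t =>
  Equiv.ofBijective _ (Finite.injective_iff_bijective.mp (hT.injective_blockMap i t))

lemma toTriangularFamily_apply (hT : IsChainIsometry T) (i : Fin n) (t : ∀ j : Set.Ioi i, X j)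
    (x : X i) : hT.toTriangularFamily i t x = T (extend i t x) i :=
  rfl

end IsChainIsometry

variable [∀ i, Nonempty (X i)] [∀ i, Finite (X i)]

noncomputable def isChainIsometryEquiv :
    {T : Perm (∀ i, X i) // IsChainIsometry T} ≃ TriangularFamily X where
  toFun T := T.2.toTriangularFamily
  invFun σ := ⟨σ.toPerm, σ.isChainIsometry_toPerm⟩
  left_inv T := Subtype.ext <| Equiv.ext fun u => funext fun i => T.2.apply_extend_upper u i
  right_inv σ := funext fun i => funext fun t => Equiv.ext fun x => by
    simp [IsChainIsometry.toTriangularFamily_apply, TriangularFamily.toPerm,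
      TriangularFamily.toFun]

end ChainIsometry

open ChainIsometry

lemma chainDist_le_iff {F : Type*} [DecidableEq F] {n : ℕ} {k : Fin n → ℕ}
    {u v : ∀ i : Fin n, Fin (k i) → F} {m : ℕ} : chainDist u v ≤ m ↔ AgreeFrom m u v := by
  simp only [chainDist, Finset.sup_le_iff, Finset.mem_filter, Finset.mem_univ, true_and, AgreeFrom]
  refine ⟨fun h i hi => ?_, fun h i hne => ?_⟩
  · by_contra hne
    have := h i hne
    omega
  · by_contra hm
    exact hne (h i (by omega))

lemma chainDist_map_eq_iff_isChainIsometry {F : Type*} [DecidableEq F] {n : ℕ} {k : Fin n → ℕ}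
    (T : Perm (∀ i : Fin n, Fin (k i) → F)) :
    (∀ u v, chainDist (T u) (T v) = chainDist u v) ↔ IsChainIsometry T := by
  simp only [IsChainIsometry, ← chainDist_le_iff]
  exact ⟨fun h _ u v => by rw [h], fun h u v => eq_of_forall_ge_iff fun m => h m u v⟩

/-- The order of the symmetry group of the chain poset block space
`V = F_q^{k_1} × … × F_q^{k_n}` is
`(q^{k_1}!)^{q^{N-k_1}} ⋯ (q^{k_{n-1}}!)^{q^{k_n}} · (q^{k_n}!)`, i.e.
`∏_i (q^{k_i}!)^{q^{k_{i+1}+⋯+k_n}}`. -/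
theorem stmt3 {F : Type*} [Field F] [Fintype F] [DecidableEq F] {n : ℕ} {k : Fin n → ℕ} :
    Nat.card {T : Equiv.Perm (∀ i : Fin n, Fin (k i) → F) //
        ∀ u v, chainDist (T u) (T v) = chainDist u v} =
      ∏ i : Fin n, (Nat.factorial ((Fintype.card F) ^ (k i))) ^
        ((Fintype.card F) ^ (∑ j ∈ Finset.univ.filter fun j => i < j, k j)) := by
  have hblock (i : Fin n) : Nat.card (Fin (k i) → F) = Fintype.card F ^ k i := by
    rw [Nat.card_fun, Nat.card_fin, Nat.card_eq_fintype_card]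
  rw [Nat.card_congr (Equiv.subtypeEquivRight chainDist_map_eq_iff_isChainIsometry),
    Nat.card_congr isChainIsometryEquiv, card_triangularFamily]
  simp only [hblock, Finset.prod_pow_eq_pow_sum, Finset.filter_lt_eq_Ioi]
end

section
/- Let V = U_1 ⊕ ... ⊕ U_m with the (m,n,π)-ordered Hamming block metric, and let T : V → V be a symmetry with T(0) = 0. Then for each index i there exists an index j such that T maps the subspace U_{i,1} = V_{i1} (vectors supported only in the first block of chain i) bijectively onto U_{j,1}, and dim V_{i1} = dim V_{j1}. -/
/-- The `(m,n,π)`-ordered Hamming block metric: `d(u,v) = Σ_i d_i(u_i,v_i)`. -/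
def ohDist {F : Type*} [DecidableEq F] {m n : ℕ} {k : Fin m → Fin n → ℕ}
    (u v : ∀ i : Fin m, ∀ l : Fin n, Fin (k i l) → F) : ℕ :=
  ∑ i : Fin m, chainDist (u i) (v i)

/-- `U_{i,1}`: the set of vectors supported only in the first block of chain `i`. -/
def firstBlock (F : Type*) [Field F] {m n : ℕ} (k : Fin m → Fin n → ℕ) (hn : 0 < n)
    (i : Fin m) : Set (∀ a : Fin m, ∀ l : Fin n, Fin (k a l) → F) :=
  {v | ∀ (a : Fin m) (l : Fin n), ¬(a = i ∧ l = ⟨0, hn⟩) → v a l = 0}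

section helpers
variable {F : Type*} [DecidableEq F]

lemma chainDist_eq_zero_iff {n : ℕ} {k : Fin n → ℕ} (u v : ∀ i : Fin n, Fin (k i) → F) :
    chainDist u v = 0 ↔ u = v := by
  unfold chainDist
  constructor
  · intro h
    funext i
    by_contra hne
    have hi : i ∈ Finset.univ.filter fun i => u i ≠ v i := by simp [hne]
    have := Finset.le_sup (f := fun i : Fin n => (i : ℕ) + 1) hi
    rw [h] at this
    exact Nat.not_succ_le_zero _ this
  · intro h; subst h; simp

lemma one_le_chainDist {n : ℕ} {k : Fin n → ℕ} {u v : ∀ i : Fin n, Fin (k i) → F}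
    (h : u ≠ v) : 1 ≤ chainDist u v := by
  rcases Nat.eq_zero_or_pos (chainDist u v) with h0 | h1
  · exact absurd ((chainDist_eq_zero_iff u v).1 h0) h
  · exact h1

variable {m n : ℕ} {k : Fin m → Fin n → ℕ}

lemma ohDist_ge_two {u v : ∀ i : Fin m, ∀ l : Fin n, Fin (k i l) → F} {i j : Fin m}
    (hij : i ≠ j) (h1 : u i ≠ v i) (h2 : u j ≠ v j) : 2 ≤ ohDist u v := by
  unfold ohDist
  have hle := Finset.sum_le_sum_of_subset (f := fun a => chainDist (u a) (v a))
    (Finset.subset_univ ({i, j} : Finset (Fin m)))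
  simp only [Finset.sum_pair hij] at hle
  have h1' := one_le_chainDist h1
  have h2' := one_le_chainDist h2
  omega

lemma support_lemma (hn : 0 < n) {u v : ∀ i : Fin m, ∀ l : Fin n, Fin (k i l) → F}
    (h : ohDist u v ≤ 1) (huv : u ≠ v) :
    ∃ j : Fin m, (∀ a l, ¬(a = j ∧ l = ⟨0, hn⟩) → u a l = v a l) ∧
      u j ⟨0, hn⟩ ≠ v j ⟨0, hn⟩ := by
  obtain ⟨j, hj⟩ : ∃ j, u j ≠ v j := by
    by_contra hc
    push_neg at hc
    exact huv (funext hc)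
  have hout : ∀ a l, ¬(a = j ∧ l = ⟨0, hn⟩) → u a l = v a l := by
    rintro a l hal
    by_contra hne
    have ha : u a ≠ v a := fun he => hne (congrFun he l)
    have hla : l ∈ Finset.univ.filter fun l' => u a l' ≠ v a l' := by simp [hne]
    have hge : (l : ℕ) + 1 ≤ chainDist (u a) (v a) :=
      Finset.le_sup (f := fun l' : Fin n => (l' : ℕ) + 1) hla
    by_cases haj : a = j
    · subst haj
      have hl0 : l ≠ (⟨0, hn⟩ : Fin n) := fun hl => hal ⟨rfl, hl⟩
      have hlpos : 0 < (l : ℕ) := by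
        rcases Nat.eq_zero_or_pos (l : ℕ) with h0 | h1
        · exact absurd (Fin.ext h0) hl0
        · exact h1
      have hle : chainDist (u a) (v a) ≤ ohDist u v :=
        Finset.single_le_sum (f := fun b => chainDist (u b) (v b))
          (fun _ _ => Nat.zero_le _) (Finset.mem_univ a)
      omega
    · exact absurd h (Nat.not_le.2 (ohDist_ge_two haj ha hj))
  refine ⟨j, hout, ?_⟩
  by_contra h0
  apply hj
  funext l
  by_cases hl : l = (⟨0, hn⟩ : Fin n)
  · rw [hl, h0]
  · exact hout j l (fun hc => hl hc.2)

variable [hF : Field F]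

lemma zero_mem_firstBlock (hn : 0 < n) (i : Fin m) :
    (0 : ∀ a : Fin m, ∀ l : Fin n, Fin (k a l) → F) ∈ firstBlock F k hn i :=
  fun _ _ _ => rfl

lemma ohDist_le_one_of_mem (hn : 0 < n) {i : Fin m}
    {u v : ∀ a : Fin m, ∀ l : Fin n, Fin (k a l) → F}
    (hu : u ∈ firstBlock F k hn i) (hv : v ∈ firstBlock F k hn i) : ohDist u v ≤ 1 := by
  unfold ohDist
  have hz : ∀ a, a ≠ i → chainDist (u a) (v a) = 0 := by
    intro a ha
    rw [chainDist_eq_zero_iff]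
    funext l
    rw [hu a l (fun hc => ha hc.1), hv a l (fun hc => ha hc.1)]
  rw [Finset.sum_eq_single i (fun a _ ha => hz a ha) (by simp)]
  apply Finset.sup_le
  intro l hl
  simp only [Finset.mem_filter] at hl
  have hl0 : l = (⟨0, hn⟩ : Fin n) := by
    by_contra hne
    exact hl.2 (by rw [hu i l (fun hc => hne hc.2), hv i l (fun hc => hne hc.2)])
  subst hl0
  simp

noncomputable def firstBlockEquiv (hn : 0 < n) (a : Fin m) :
    firstBlock F k hn a ≃ (Fin (k a ⟨0, hn⟩) → F) where
  toFun v := v.1 a ⟨0, hn⟩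
  invFun f := ⟨Function.update (0 : ∀ b : Fin m, ∀ l : Fin n, Fin (k b l) → F) a
      (Function.update (0 : ∀ l : Fin n, Fin (k a l) → F) ⟨0, hn⟩ f), by
    intro b l hbl
    by_cases hb : b = a
    · subst hb
      have hl : l ≠ (⟨0, hn⟩ : Fin n) := fun hc => hbl ⟨rfl, hc⟩
      rw [Function.update_self, Function.update_of_ne hl]
      rfl
    · rw [Function.update_of_ne hb]
      rfl⟩
  left_inv v := by
    apply Subtype.ext
    funext b l
    dsimp only
    by_cases hb : b = a
    · subst hb
      by_cases hl : l = (⟨0, hn⟩ : Fin n)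
      · subst hl
        simp
      · rw [Function.update_self, Function.update_of_ne hl, (v.2 b l (fun hc => hl hc.2))]
        rfl
    · rw [Function.update_of_ne hb, (v.2 b l (fun hc => hb hc.1))]
      rfl
  right_inv f := by simp

lemma card_firstBlock [Fintype F] (hn : 0 < n) (a : Fin m) :
    Nat.card (firstBlock F k hn a) = Fintype.card F ^ (k a ⟨0, hn⟩) := by
  rw [Nat.card_congr (firstBlockEquiv hn a)]
  simp [Nat.card_eq_fintype_card]

end helpers

/-- A symmetry fixing the origin maps each `U_{i,1}` bijectively onto some `U_{j,1}`
with `dim V_{i1} = dim V_{j1}`. -/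
theorem stmt9 {F : Type*} [Field F] [Fintype F] [DecidableEq F] {m n : ℕ}
    {k : Fin m → Fin n → ℕ} (hn : 0 < n)
    (T : (∀ i : Fin m, ∀ l : Fin n, Fin (k i l) → F) →
         (∀ i : Fin m, ∀ l : Fin n, Fin (k i l) → F))
    (hTbij : Function.Bijective T)
    (hTiso : ∀ u v, ohDist (T u) (T v) = ohDist u v)
    (hT0 : T 0 = 0) :
    ∀ i : Fin m, ∃ j : Fin m,
      T '' firstBlock F k hn i = firstBlock F k hn j ∧ k i ⟨0, hn⟩ = k j ⟨0, hn⟩ := by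
  intro i
  by_cases hki : k i ⟨0, hn⟩ = 0
  · -- degenerate case: the first block of chain i is trivial, so firstBlock i = {0}
    refine ⟨i, ?_, rfl⟩
    have hfb : firstBlock F k hn i = {0} := by
      ext v
      simp only [Set.mem_singleton_iff]
      constructor
      · intro hv
        funext a l x
        by_cases hc : a = i ∧ l = ⟨0, hn⟩
        · obtain ⟨ha, hl⟩ := hc
          subst ha; subst hl
          have := x.isLt
          omega
        · exact congrFun (hv a l hc) x
      · intro hv; subst hv; exact zero_mem_firstBlock hn i
    rw [hfb, Set.image_singleton, hT0]
  · -- main case: k i ⟨0,hn⟩ > 0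
    have hkpos : 0 < k i ⟨0, hn⟩ := Nat.pos_of_ne_zero hki
    -- the "all ones in block (i,0)" vector
    set u0 : ∀ a : Fin m, ∀ l : Fin n, Fin (k a l) → F :=
      Function.update (0 : ∀ a : Fin m, ∀ l : Fin n, Fin (k a l) → F) i
        (Function.update (0 : ∀ l : Fin n, Fin (k i l) → F) ⟨0, hn⟩ (fun _ => 1)) with hu0
    have hu0val : u0 i ⟨0, hn⟩ = fun _ => (1 : F) := by
      rw [hu0, Function.update_self, Function.update_self]
    have hu0mem : u0 ∈ firstBlock F k hn i := by
      intro a l hal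
      by_cases ha : a = i
      · subst ha
        have hl : l ≠ (⟨0, hn⟩ : Fin n) := fun hc => hal ⟨rfl, hc⟩
        rw [hu0, Function.update_self, Function.update_of_ne hl]
        rfl
      · rw [hu0, Function.update_of_ne ha]
        rfl
    have hu0i : u0 i ⟨0, hn⟩ ≠ 0 := by
      rw [hu0val]
      intro hc
      exact one_ne_zero (congrFun hc ⟨0, hkpos⟩)
    have hu0ne : u0 ≠ 0 := by
      intro hc
      exact hu0i (by rw [hc]; rfl)
    have hTu0ne : T u0 ≠ 0 := fun h => hu0ne (hTbij.1 (h.trans hT0.symm))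
    have hd0 : ohDist (T u0) 0 ≤ 1 := by
      rw [← hT0, hTiso]
      exact ohDist_le_one_of_mem hn hu0mem (zero_mem_firstBlock hn i)
    obtain ⟨j, hjout, hjne⟩ := support_lemma hn hd0 hTu0ne
    have hTu0mem : T u0 ∈ firstBlock F k hn j := fun a l hal => hjout a l hal
    have hTu0j : T u0 j ⟨0, hn⟩ ≠ 0 := hjne
    have himg : T '' firstBlock F k hn i = firstBlock F k hn j := by
        apply Set.Subset.antisymm
        · rintro _ ⟨v, hv, rfl⟩
          by_cases hv0 : T v = 0
          · rw [hv0]; exact zero_mem_firstBlock hn j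
          · have hd1 : ohDist (T v) 0 ≤ 1 := by
              rw [← hT0, hTiso]
              exact ohDist_le_one_of_mem hn hv (zero_mem_firstBlock hn i)
            have hd2 : ohDist (T v) (T u0) ≤ 1 := by
              rw [hTiso]
              exact ohDist_le_one_of_mem hn hv hu0mem
            obtain ⟨j', hj'out, hj'ne⟩ := support_lemma hn hd1 hv0
            have hjj : j' = j := by
              by_contra hne
              refine absurd hd2 (Nat.not_le.2 (ohDist_ge_two hne ?_ ?_))
              · -- T v j' ≠ T u0 j'
                intro heq
                apply hj'ne
                rw [congrFun heq ⟨0, hn⟩, hTu0mem j' ⟨0, hn⟩ (fun hc => hne hc.1)]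
                rfl
              · -- T v j ≠ T u0 j
                intro heq
                apply hTu0j
                rw [← congrFun heq ⟨0, hn⟩,
                  hj'out j ⟨0, hn⟩ (fun hc => hne hc.1.symm)]
                rfl
            subst hjj
            exact fun a l hal => hj'out a l hal
        · intro w hw
          obtain ⟨v, rfl⟩ := hTbij.2 w
          refine ⟨v, ?_, rfl⟩
          by_cases hvz : v = 0
          · subst hvz; exact zero_mem_firstBlock hn i
          · have hd1 : ohDist v 0 ≤ 1 := by
              rw [← hTiso, hT0]
              exact ohDist_le_one_of_mem hn hw (zero_mem_firstBlock hn j)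
            have hd2 : ohDist v u0 ≤ 1 := by
              rw [← hTiso]
              exact ohDist_le_one_of_mem hn hw hTu0mem
            obtain ⟨i', hi'out, hi'ne⟩ := support_lemma hn hd1 hvz
            have hii : i' = i := by
              by_contra hne
              refine absurd hd2 (Nat.not_le.2 (ohDist_ge_two hne ?_ ?_))
              · intro heq
                apply hi'ne
                rw [congrFun heq ⟨0, hn⟩, hu0mem i' ⟨0, hn⟩ (fun hc => hne hc.1)]
                rfl
              · intro heq
                apply hu0i
                rw [← congrFun heq ⟨0, hn⟩,
                  hi'out i ⟨0, hn⟩ (fun hc => hne hc.1.symm)]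
                rfl
            subst hii
            exact fun a l hal => hi'out a l hal
    refine ⟨j, himg, ?_⟩
    have hc1 : Nat.card (T '' firstBlock F k hn i) = Nat.card (firstBlock F k hn i) :=
      Nat.card_image_of_injective hTbij.1 _
    rw [himg, card_firstBlock hn i, card_firstBlock hn j] at hc1
    exact (Nat.pow_right_injective Fintype.one_lt_card hc1).symm
end

section
/- Let V = U_1 ⊕ ... ⊕ U_m with the (m,n,π)-ordered Hamming block metric, and let T : V → V be a symmetry with T(0) = 0. Then for each index 1 ≤ i ≤ m there exists an index 1 ≤ j ≤ m such that T(U_i) = U_j and k_{il} = k_{jl} for all 1 ≤ l ≤ n. -/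
/-- `U_i`: the set of vectors of `V` supported only in the `i`-th chain. -/
def chainSubspace (F : Type*) [Field F] {m n : ℕ} (k : Fin m → Fin n → ℕ) (i : Fin m) :
    Set (∀ a : Fin m, ∀ l : Fin n, Fin (k a l) → F) :=
  {v | ∀ a : Fin m, a ≠ i → v a = 0}

section ChainAux
variable {F : Type*} [DecidableEq F] {n : ℕ} {kk : Fin n → ℕ}

lemma chainDist_comm (u v : ∀ i : Fin n, Fin (kk i) → F) : chainDist u v = chainDist v u := by
  unfold chainDist; congr 1; ext i; simp [ne_comm]

lemma chainDist_self (u : ∀ i : Fin n, Fin (kk i) → F) : chainDist u u = 0 := by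
  simp [chainDist]

lemma le_chainDist {u v : ∀ i : Fin n, Fin (kk i) → F} {i : Fin n} (h : u i ≠ v i) :
    (i : ℕ) + 1 ≤ chainDist u v :=
  Finset.le_sup (f := fun j : Fin n => (j : ℕ) + 1) (by simp [h])

lemma chainDist_eq_zero {u v : ∀ i : Fin n, Fin (kk i) → F} (h : chainDist u v = 0) : u = v := by
  by_contra hne
  obtain ⟨i, hi⟩ : ∃ i, u i ≠ v i := by
    by_contra hc; push_neg at hc; exact hne (funext hc)
  have := le_chainDist hi
  omega

lemma chainDist_ultra (u v w : ∀ i : Fin n, Fin (kk i) → F) :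
    chainDist u w ≤ max (chainDist u v) (chainDist v w) := by
  apply Finset.sup_le
  intro i hi
  simp only [Finset.mem_filter, Finset.mem_univ, true_and] at hi
  rcases eq_or_ne (u i) (v i) with h | h
  · exact le_max_of_le_right (le_chainDist (h ▸ hi))
  · exact le_max_of_le_left (le_chainDist h)

lemma chainDist_le_iff_s10 {u v : ∀ i : Fin n, Fin (kk i) → F} {l : ℕ} :
    chainDist u v ≤ l ↔ ∀ i : Fin n, u i ≠ v i → (i : ℕ) + 1 ≤ l := by
  constructor
  · intro h i hi; exact le_trans (le_chainDist hi) h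
  · intro h; apply Finset.sup_le; intro i hi
    simp only [Finset.mem_filter, Finset.mem_univ, true_and] at hi
    exact h i hi
end ChainAux

section OhAux
variable {F : Type*} [DecidableEq F] [Zero F] {m n : ℕ} {k : Fin m → Fin n → ℕ}


lemma ohDist_comm (u v : ∀ i : Fin m, ∀ l : Fin n, Fin (k i l) → F) : ohDist u v = ohDist v u := by
  unfold ohDist; exact Finset.sum_congr rfl fun i _ => chainDist_comm _ _

lemma weight_eq {i : Fin m} {v : ∀ i : Fin m, ∀ l : Fin n, Fin (k i l) → F} (hv : ∀ a, a ≠ i → v a = 0) :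
    ohDist v 0 = chainDist (v i) 0 := by
  unfold ohDist
  refine Finset.sum_eq_single i (fun a _ ha => ?_) (by simp)
  rw [hv a ha]; exact chainDist_self _

lemma chain_le_ohDist (v : ∀ i : Fin m, ∀ l : Fin n, Fin (k i l) → F) (a : Fin m) : chainDist (v a) 0 ≤ ohDist v 0 := by
  unfold ohDist
  exact Finset.single_le_sum (f := fun a => chainDist (v a) ((0 : ∀ i : Fin m, ∀ l : Fin n, Fin (k i l) → F) a))
    (fun _ _ => Nat.zero_le _) (Finset.mem_univ a)

lemma ohDist_pair {a b : Fin m} {v w : ∀ i : Fin m, ∀ l : Fin n, Fin (k i l) → F} (hab : a ≠ b)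
    (hv : ∀ c, c ≠ a → v c = 0) (hw : ∀ c, c ≠ b → w c = 0) :
    ohDist v w = ohDist v 0 + ohDist w 0 := by
  have h1 : ohDist v w
      = chainDist (v a) (w a) + ∑ c ∈ Finset.univ.erase a, chainDist (v c) (w c) :=
    (Finset.add_sum_erase _ _ (Finset.mem_univ a)).symm
  have h2 : ∑ c ∈ Finset.univ.erase a, chainDist (v c) (w c)
      = chainDist (v b) (w b) + ∑ c ∈ (Finset.univ.erase a).erase b, chainDist (v c) (w c) :=
    (Finset.add_sum_erase _ _ (by simp [hab.symm])).symm
  have h3 : ∑ c ∈ (Finset.univ.erase a).erase b, chainDist (v c) (w c) = 0 := by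
    refine Finset.sum_eq_zero fun c hc => ?_
    simp only [Finset.mem_erase, Finset.mem_univ, and_true] at hc
    rw [hv c hc.2, hw c hc.1]; exact chainDist_self _
  rw [weight_eq hv, weight_eq hw, h1, h2, h3]
  rw [hw a hab, hv b (Ne.symm hab), chainDist_comm (0 : ∀ l : Fin n, Fin (k b l) → F)]
  ring
end OhAux

section Main
variable {F : Type*} [DecidableEq F] [Zero F] {m n : ℕ} {k : Fin m → Fin n → ℕ}

lemma ball_subset_chain {i : Fin m} {u v : ∀ a : Fin m, ∀ l : Fin n, Fin (k a l) → F}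
    (hu : ∀ a, a ≠ i → u a = 0)
    (hv : ohDist v 0 ≤ ohDist u 0) (hd : ohDist u v ≤ ohDist u 0) :
    ∀ a, a ≠ i → v a = 0 := by
  set S := ∑ c ∈ Finset.univ.erase i, chainDist (v c) 0 with hS
  have hw : ohDist v 0 = chainDist (v i) 0 + S :=
    (Finset.add_sum_erase _ (fun c => chainDist (v c) 0) (Finset.mem_univ i)).symm
  have hduv : ohDist u v = chainDist (u i) (v i) + S := by
    have h1 : ohDist u v
        = chainDist (u i) (v i) + ∑ c ∈ Finset.univ.erase i, chainDist (u c) (v c) :=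
      (Finset.add_sum_erase _ _ (Finset.mem_univ i)).symm
    rw [h1, hS]
    congr 1
    refine Finset.sum_congr rfl fun c hc => ?_
    simp only [Finset.mem_erase, Finset.mem_univ, and_true] at hc
    rw [hu c hc, chainDist_comm]
  have hwu : ohDist u 0 = chainDist (u i) 0 := weight_eq hu
  have hultra : chainDist (u i) 0 ≤ max (chainDist (u i) (v i)) (chainDist (v i) 0) :=
    chainDist_ultra _ _ _
  have hS0 : S = 0 := by
    rcases max_cases (chainDist (u i) (v i)) (chainDist (v i) 0) with ⟨he, _⟩ | ⟨he, _⟩ <;>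
      rw [he] at hultra <;> omega
  intro a ha
  have : chainDist (v a) 0 = 0 := by
    have := (Finset.sum_eq_zero_iff.mp hS0) a (by simp [ha])
    exact this
  have := chainDist_eq_zero this
  exact this

lemma dist_le_same_chain {i : Fin m} {v w : ∀ a : Fin m, ∀ l : Fin n, Fin (k a l) → F}
    (hv : ∀ a, a ≠ i → v a = 0) (hw : ∀ a, a ≠ i → w a = 0) :
    ohDist v w ≤ max (ohDist v 0) (ohDist w 0) := by
  have h1 : ohDist v w = chainDist (v i) (w i) := by
    unfold ohDist
    refine Finset.sum_eq_single i (fun a _ ha => ?_) (by simp)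
    rw [hv a ha, hw a ha]; exact chainDist_self _
  rw [h1, weight_eq hv, weight_eq hw]
  have := chainDist_ultra (v i) 0 (w i)
  rwa [chainDist_comm (0 : ∀ l : Fin n, Fin (k i l) → F) (w i)] at this

/-- the metric predicate characterizing single-chain vectors -/
def goodQ (u : ∀ a : Fin m, ∀ l : Fin n, Fin (k a l) → F) : Prop :=
  ∀ v v', ohDist v 0 ≤ ohDist u 0 → ohDist u v ≤ ohDist u 0 →
    ohDist v' 0 ≤ ohDist u 0 → ohDist u v' ≤ ohDist u 0 →
    ohDist v v' ≤ max (ohDist v 0) (ohDist v' 0)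

lemma goodQ_of_chain {i : Fin m} {u : ∀ a : Fin m, ∀ l : Fin n, Fin (k a l) → F}
    (hu : ∀ a, a ≠ i → u a = 0) : goodQ u := by
  intro v v' hv hd hv' hd'
  exact dist_le_same_chain (ball_subset_chain hu hv hd) (ball_subset_chain hu hv' hd')

end Main

section Main2
variable {F : Type*} [DecidableEq F] [Zero F] {m n : ℕ} {k : Fin m → Fin n → ℕ}

lemma proj_spec (u : ∀ a : Fin m, ∀ l : Fin n, Fin (k a l) → F) (a : Fin m) (ha : u a ≠ 0) :
    ∃ v : ∀ c : Fin m, ∀ l : Fin n, Fin (k c l) → F,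
      (∀ c, c ≠ a → v c = 0) ∧ ohDist v 0 = chainDist (u a) 0 ∧
      ohDist v 0 ≤ ohDist u 0 ∧ ohDist u v ≤ ohDist u 0 := by
  classical
  refine ⟨Function.update 0 a (u a), fun c hc => ?_, ?_, ?_, ?_⟩
  · rw [Function.update_of_ne hc]; rfl
  · rw [weight_eq (i := a) (fun c hc => by rw [Function.update_of_ne hc]; rfl),
      Function.update_self]
  · rw [weight_eq (i := a) (fun c hc => by rw [Function.update_of_ne hc]; rfl),
      Function.update_self]
    exact chain_le_ohDist u a
  · unfold ohDist
    refine Finset.sum_le_sum fun c _ => ?_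
    rcases eq_or_ne c a with rfl | hc
    · rw [Function.update_self, chainDist_self]; exact Nat.zero_le _
    · rw [Function.update_of_ne hc]

lemma not_goodQ {a b : Fin m} (hab : a ≠ b) {u : ∀ c : Fin m, ∀ l : Fin n, Fin (k c l) → F}
    (ha : u a ≠ 0) (hb : u b ≠ 0) : ¬ goodQ u := by
  obtain ⟨v, hvc, hvw, hv1, hv2⟩ := proj_spec u a ha
  obtain ⟨v', hvc', hvw', hv1', hv2'⟩ := proj_spec u b hb
  intro hQ
  have hle := hQ v v' hv1 hv2 hv1' hv2'
  have heq : ohDist v v' = ohDist v 0 + ohDist v' 0 := ohDist_pair hab hvc hvc'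
  have hpa : 0 < ohDist v 0 := by
    rw [hvw]; rcases (Nat.eq_zero_or_pos (chainDist (u a) 0)).symm with h | h
    · exact h
    · exact absurd (chainDist_eq_zero h) ha
  have hpb : 0 < ohDist v' 0 := by
    rw [hvw']; rcases (Nat.eq_zero_or_pos (chainDist (u b) 0)).symm with h | h
    · exact h
    · exact absurd (chainDist_eq_zero h) hb
  rcases max_cases (ohDist v 0) (ohDist v' 0) with ⟨he, _⟩ | ⟨he, _⟩ <;> rw [he] at hle <;> omega

end Main2

section Main3
variable {F : Type*} [DecidableEq F] [Zero F] {m n : ℕ} {k : Fin m → Fin n → ℕ}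

lemma ohDist_pos {u : ∀ c : Fin m, ∀ l : Fin n, Fin (k c l) → F} (hu : u ≠ 0) :
    0 < ohDist u 0 := by
  rcases Nat.eq_zero_or_pos (ohDist u 0) with h | h
  · exfalso
    apply hu
    funext a
    have := (Finset.sum_eq_zero_iff.mp h) a (Finset.mem_univ a)
    exact chainDist_eq_zero this
  · exact h

lemma goodQ_transfer
    (T : (∀ c : Fin m, ∀ l : Fin n, Fin (k c l) → F) → (∀ c : Fin m, ∀ l : Fin n, Fin (k c l) → F))
    (hTsurj : Function.Surjective T)
    (hTiso : ∀ u v, ohDist (T u) (T v) = ohDist u v) (hT0 : T 0 = 0)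
    {u : ∀ c : Fin m, ∀ l : Fin n, Fin (k c l) → F} (hQ : goodQ u) : goodQ (T u) := by
  have e0 : ∀ y, ohDist (T y) 0 = ohDist y 0 := fun y => by
    have h := hTiso y 0; rwa [hT0] at h
  intro v v' hv hd hv' hd'
  obtain ⟨x, rfl⟩ := hTsurj v
  obtain ⟨x', rfl⟩ := hTsurj v'
  rw [e0, e0] at hv hv' ⊢
  rw [hTiso, e0] at hd hd'
  rw [hTiso]
  exact hQ x x' hv hd hv' hd'

lemma exists_chain_of_goodQ {u : ∀ c : Fin m, ∀ l : Fin n, Fin (k c l) → F}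
    (hQ : goodQ u) (hu : u ≠ 0) : ∃ i, ∀ a, a ≠ i → u a = 0 := by
  obtain ⟨a, ha⟩ : ∃ a, u a ≠ 0 := by
    by_contra hc; push_neg at hc; exact hu (funext hc)
  refine ⟨a, fun b hb => ?_⟩
  by_contra hb0
  exact not_goodQ hb hb0 ha hQ

lemma image_chain_subset
    (T : (∀ c : Fin m, ∀ l : Fin n, Fin (k c l) → F) → (∀ c : Fin m, ∀ l : Fin n, Fin (k c l) → F))
    (hTbij : Function.Bijective T)
    (hTiso : ∀ u v, ohDist (T u) (T v) = ohDist u v) (hT0 : T 0 = 0)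
    {i : Fin m} {u0 : ∀ c : Fin m, ∀ l : Fin n, Fin (k c l) → F}
    (h0 : ∀ a, a ≠ i → u0 a = 0) (h0ne : u0 ≠ 0) :
    ∃ j, (∀ a, a ≠ j → T u0 a = 0) ∧
      ∀ u, (∀ a, a ≠ i → u a = 0) → (∀ a, a ≠ j → T u a = 0) := by
  have e0 : ∀ y, ohDist (T y) 0 = ohDist y 0 := fun y => by
    have h := hTiso y 0; rwa [hT0] at h
  have hTu0ne : T u0 ≠ 0 := fun h => h0ne (hTbij.1 (h.trans hT0.symm))
  obtain ⟨j, hj⟩ := exists_chain_of_goodQ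
    (goodQ_transfer T hTbij.2 hTiso hT0 (goodQ_of_chain h0)) hTu0ne
  refine ⟨j, hj, fun u hu => ?_⟩
  rcases eq_or_ne u 0 with rfl | hune
  · rw [hT0]; intro a _; rfl
  · have hTune : T u ≠ 0 := fun h => hune (hTbij.1 (h.trans hT0.symm))
    obtain ⟨j', hj'⟩ := exists_chain_of_goodQ
      (goodQ_transfer T hTbij.2 hTiso hT0 (goodQ_of_chain hu)) hTune
    rcases eq_or_ne j' j with rfl | hjj
    · exact hj'
    · exfalso
      have hd : ohDist (T u) (T u0) = ohDist (T u) 0 + ohDist (T u0) 0 :=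
        ohDist_pair hjj hj' hj
      rw [hTiso, e0, e0] at hd
      have hle : ohDist u u0 ≤ max (ohDist u 0) (ohDist u0 0) := dist_le_same_chain hu h0
      have p1 := ohDist_pos hune
      have p2 := ohDist_pos h0ne
      rcases max_cases (ohDist u 0) (ohDist u0 0) with ⟨he, _⟩ | ⟨he, _⟩ <;>
        rw [he] at hle <;> omega

end Main3

section Card
variable {F : Type*} [DecidableEq F] [Zero F] {m n : ℕ} {k : Fin m → Fin n → ℕ}

lemma mem_level_iff {i : Fin m} {l : ℕ} {v : ∀ a : Fin m, ∀ b : Fin n, Fin (k a b) → F} :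
    ((∀ a, a ≠ i → v a = 0) ∧ ohDist v 0 ≤ l) ↔
      ∀ (a : Fin m) (b : Fin n), ¬(a = i ∧ (b : ℕ) < l) → v a b = 0 := by
  constructor
  · rintro ⟨h1, h2⟩ a b hab
    push_neg at hab
    rcases eq_or_ne a i with rfl | ha
    · have hbl : l ≤ (b : ℕ) := hab rfl
      rw [weight_eq h1] at h2
      by_contra hvb
      have := le_chainDist (v := (0 : ∀ b : Fin n, Fin (k a b) → F)) (i := b) hvb
      omega
    · rw [h1 a ha]; rfl
  · intro h
    have h1 : ∀ a, a ≠ i → v a = 0 := fun a ha =>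
      funext fun b => h a b fun hc => ha hc.1
    refine ⟨h1, ?_⟩
    rw [weight_eq h1]
    refine chainDist_le_iff_s10.mpr fun b hb => ?_
    by_contra hc
    exact hb (h i b fun hc2 => hc (by omega))

lemma card_level [Fintype F] (i : Fin m) (l : ℕ) :
    Nat.card {v : ∀ a : Fin m, ∀ b : Fin n, Fin (k a b) → F //
        ∀ (a : Fin m) (b : Fin n), ¬(a = i ∧ (b : ℕ) < l) → v a b = 0}
      = ∏ b ∈ Finset.univ.filter (fun b : Fin n => (b : ℕ) < l), Fintype.card F ^ (k i b) := by
  classical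
  have e : {v : ∀ a : Fin m, ∀ b : Fin n, Fin (k a b) → F //
        ∀ (a : Fin m) (b : Fin n), ¬(a = i ∧ (b : ℕ) < l) → v a b = 0}
      ≃ (∀ b : {b : Fin n // (b : ℕ) < l}, Fin (k i b.1) → F) :=
    { toFun := fun v b => v.1 i b.1
      invFun := fun g => ⟨Function.update (0 : ∀ a : Fin m, ∀ b : Fin n, Fin (k a b) → F) i
          (fun b : Fin n => if hb : (b : ℕ) < l then g ⟨b, hb⟩ else 0), by
        intro a b hab
        rcases eq_or_ne a i with rfl | ha
        · rw [Function.update_self]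
          have hbl : ¬ (b : ℕ) < l := fun hc => hab ⟨rfl, hc⟩
          rw [dif_neg hbl]
        · rw [Function.update_of_ne ha]; rfl⟩
      left_inv := by
        rintro ⟨v, hv⟩
        apply Subtype.ext
        funext a b
        rcases eq_or_ne a i with rfl | ha
        · dsimp only
          rw [Function.update_self]
          by_cases hb : (b : ℕ) < l
          · rw [dif_pos hb]
          · rw [dif_neg hb]
            exact (hv a b fun hc => hb hc.2).symm
        · dsimp only
          rw [Function.update_of_ne ha]
          exact (hv a b fun hc => ha hc.1).symm
      right_inv := by
        intro g
        funext b
        dsimp only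
        rw [Function.update_self, dif_pos b.2] }
  rw [Nat.card_congr e, Nat.card_eq_fintype_card, Fintype.card_pi]
  rw [← Finset.prod_subtype (Finset.univ.filter (fun b : Fin n => (b : ℕ) < l))
    (fun b => by simp) (fun b : Fin n => Fintype.card (Fin (k i b) → F))]
  exact Finset.prod_congr rfl fun b _ => by simp

end Card

/-- A symmetry of the ordered Hamming block space fixing the origin maps each chain
subspace `U_i` onto some chain subspace `U_j` with matching block dimensions. -/
theorem stmt10 {F : Type*} [Field F] [Fintype F] [DecidableEq F] {m n : ℕ}
    {k : Fin m → Fin n → ℕ}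
    (T : (∀ i : Fin m, ∀ l : Fin n, Fin (k i l) → F) →
         (∀ i : Fin m, ∀ l : Fin n, Fin (k i l) → F))
    (hTbij : Function.Bijective T)
    (hTiso : ∀ u v, ohDist (T u) (T v) = ohDist u v)
    (hT0 : T 0 = 0) :
    ∀ i : Fin m, ∃ j : Fin m,
      T '' chainSubspace F k i = chainSubspace F k j ∧ ∀ l : Fin n, k i l = k j l := by
  classical
  intro i
  have e0 : ∀ y, ohDist (T y) 0 = ohDist y 0 := fun y => by
    have h := hTiso y 0; rwa [hT0] at h
  by_cases hU : ∀ u ∈ chainSubspace F k i, u = 0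
  · refine ⟨i, ?_, fun l => rfl⟩
    have hUi : chainSubspace F k i = {0} := by
      apply Set.eq_singleton_iff_unique_mem.mpr
      exact ⟨fun a _ => rfl, hU⟩
    rw [hUi, Set.image_singleton, hT0]
  · push_neg at hU
    obtain ⟨u0, hu0mem, hu0ne⟩ := hU
    have h0 : ∀ a, a ≠ i → u0 a = 0 := hu0mem
    obtain ⟨j, hju0, hsub⟩ := image_chain_subset T hTbij hTiso hT0 h0 hu0ne
    set e := Equiv.ofBijective T hTbij with he
    have hTe : ∀ x, T x = e x := fun x => rfl
    have hTinviso : ∀ u v, ohDist (e.symm u) (e.symm v) = ohDist u v := fun u v => by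
      have h := hTiso (e.symm u) (e.symm v)
      rw [hTe, hTe, e.apply_symm_apply, e.apply_symm_apply] at h
      exact h.symm
    have hTinv0 : e.symm 0 = 0 := by
      have h := congrArg e.symm hT0
      rw [hTe, e.symm_apply_apply] at h
      exact h.symm
    have hTu0ne : T u0 ≠ 0 := fun h => hu0ne (hTbij.1 (h.trans hT0.symm))
    obtain ⟨j2, hj2u, hsub2⟩ :=
      image_chain_subset e.symm e.symm.bijective hTinviso hTinv0 hju0 hTu0ne
    have hei : e.symm (T u0) = u0 := by rw [hTe]; exact e.symm_apply_apply u0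
    rw [hei] at hj2u
    have hij2 : i = j2 := by
      obtain ⟨a, ha⟩ : ∃ a, u0 a ≠ 0 := by
        by_contra hc; push_neg at hc; exact hu0ne (funext hc)
      have hai : a = i := by by_contra hc; exact ha (h0 a hc)
      have haj : a = j2 := by by_contra hc; exact ha (hj2u a hc)
      rw [← hai, haj]
    have himg : T '' chainSubspace F k i = chainSubspace F k j := by
      ext x
      constructor
      · rintro ⟨u, hu, rfl⟩
        exact hsub u hu
      · intro hx
        have h1 : e.symm x ∈ chainSubspace F k i := by
          have h2 := hsub2 x hx
          rw [← hij2] at h2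
          exact h2
        exact ⟨e.symm x, h1, by rw [hTe]; exact e.apply_symm_apply x⟩
    refine ⟨j, himg, ?_⟩
    have einv0 : ∀ y, ohDist (e.symm y) 0 = ohDist y 0 := fun y => by
      have h := hTinviso y 0; rwa [hTinv0] at h
    have hcards : ∀ l : ℕ,
        (∏ b ∈ Finset.univ.filter (fun b : Fin n => (b : ℕ) < l), Fintype.card F ^ (k i b))
          = ∏ b ∈ Finset.univ.filter (fun b : Fin n => (b : ℕ) < l),
              Fintype.card F ^ (k j b) := by
      intro l
      rw [← card_level i l, ← card_level j l]
      have hset : T '' {v : ∀ a : Fin m, ∀ b : Fin n, Fin (k a b) → F |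
            ∀ (a : Fin m) (b : Fin n), ¬(a = i ∧ (b : ℕ) < l) → v a b = 0}
          = {v : ∀ a : Fin m, ∀ b : Fin n, Fin (k a b) → F |
            ∀ (a : Fin m) (b : Fin n), ¬(a = j ∧ (b : ℕ) < l) → v a b = 0} := by
        ext x
        constructor
        · rintro ⟨v, hv, rfl⟩
          have hv2 := mem_level_iff.mpr hv
          refine mem_level_iff.mp ⟨hsub v hv2.1, ?_⟩
          rw [e0]; exact hv2.2
        · intro hx
          have hx2 := mem_level_iff.mpr hx
          refine ⟨e.symm x, mem_level_iff.mp ⟨?_, ?_⟩, by rw [hTe]; exact e.apply_symm_apply x⟩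
          · have h2 := hsub2 x hx2.1
            rw [← hij2] at h2
            exact h2
          · rw [einv0]; exact hx2.2
      calc Nat.card {v : ∀ a : Fin m, ∀ b : Fin n, Fin (k a b) → F //
            ∀ (a : Fin m) (b : Fin n), ¬(a = i ∧ (b : ℕ) < l) → v a b = 0}
          = Nat.card (T '' {v : ∀ a : Fin m, ∀ b : Fin n, Fin (k a b) → F |
            ∀ (a : Fin m) (b : Fin n), ¬(a = i ∧ (b : ℕ) < l) → v a b = 0}) :=
            (Nat.card_image_of_injective hTbij.1 _).symm
        _ = _ := by rw [hset]; rfl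
    intro l
    have hins : Finset.univ.filter (fun b : Fin n => (b : ℕ) < (l : ℕ) + 1)
        = insert l (Finset.univ.filter fun b : Fin n => (b : ℕ) < (l : ℕ)) := by
      ext b
      simp only [Finset.mem_filter, Finset.mem_univ, true_and, Finset.mem_insert, Fin.ext_iff]
      omega
    have h1 := hcards ((l : ℕ) + 1)
    rw [hins, Finset.prod_insert (by simp), Finset.prod_insert (by simp), hcards (l : ℕ)] at h1
    have hpos : 0 < ∏ b ∈ Finset.univ.filter (fun b : Fin n => (b : ℕ) < (l : ℕ)),
        Fintype.card F ^ (k j b) :=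
      Finset.prod_pos fun b _ => pow_pos Fintype.card_pos _
    have h2 : Fintype.card F ^ (k i l) = Fintype.card F ^ (k j l) :=
      Nat.eq_of_mul_eq_mul_right hpos h1
    exact Nat.pow_right_injective Fintype.one_lt_card h2
end

section
/- Let P be an antichain on m elements and π = (k_1,...,k_m) a partition of N, with V = F_q^{k_1} × ... × F_q^{k_m} and d(u,v) = |{ i : u_i ≠ v_i }| the error-block metric. Then the number of linear isometries of (V,d) equals (∏_{i=1}^m ∏_{j=0}^{k_i - 1} (q^{k_i} - q^j)) · (∏_{j=1}^{l} m_j!), where m_1,...,m_l are the multiplicities of the distinct values among k_1,...,k_m. -/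
/-!
A linear isometry `T` preserves the weight `#{i | u i ≠ 0}`, so it sends a vector supported on
block `b` to a vector supported on one block; that block `τ b` does not depend on the vector,
since two nonzero vectors of block `b` landing in different blocks would have a sum of weight 2.
Vectors of two different blocks also add up to weight 2, so `τ` is injective, hence a
permutation, and `T` is the monomial map `u ↦ (A b (u b) placed in block τ b)` with linear
isomorphisms `A b : F^{k_b} ≃ F^{k_{τ b}}`. Conversely every monomial map is an isometry, and
distinct pairs `(τ, A)` give distinct maps. Such `A` exist only if `k ∘ τ = k`; then there are
`∏ |GL(k_i, F)|` of them, and the permutations with `k ∘ τ = k` number `∏ m_j!`.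
-/

/-- The error-block metric on `V = F_q^{k_1} × … × F_q^{k_m}`:
`d(u,v) = |{ i : u_i ≠ v_i }|`. -/
def blockDist {F : Type*} [DecidableEq F] {m : ℕ} {k : Fin m → ℕ}
    (u v : ∀ i : Fin m, Fin (k i) → F) : ℕ :=
  (Finset.univ.filter fun i => u i ≠ v i).card

open Equiv Function Finset

section Hamming

variable {ι : Type*} [Fintype ι] {β : ι → Type*} [∀ i, DecidableEq (β i)]

theorem hammingDist_comp_equiv {κ : Type*} [Fintype κ] (e : κ ≃ ι) (x y : ∀ i, β i) :
    hammingDist (fun i => x (e i)) (fun i => y (e i)) = hammingDist x y :=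
  card_equiv e (by simp)

variable [∀ i, Zero (β i)]

theorem hammingNorm_le_one_iff {x : ∀ i, β i} :
    hammingNorm x ≤ 1 ↔ ∀ i, x i ≠ 0 → ∀ j, x j ≠ 0 → i = j := by
  simp [hammingNorm, card_le_one]

theorem hammingNorm_le_one_of_apply_ne_zero {x : ∀ i, β i} {a : ι}
    (h : ∀ j, x j ≠ 0 → j = a) : hammingNorm x ≤ 1 :=
  hammingNorm_le_one_iff.2 fun i hi j hj => (h i hi).trans (h j hj).symm

theorem hammingNorm_single_le_one [DecidableEq ι] (i : ι) (x : β i) :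
    hammingNorm (Pi.single i x) ≤ 1 :=
  hammingNorm_le_one_of_apply_ne_zero fun _ hj => by_contra fun h => hj (Pi.single_eq_of_ne h x)

end Hamming

section Monomial

variable {R ι : Type*} [Semiring R] {M : ι → Type*} [∀ i, AddCommMonoid (M i)]
  [∀ i, Module R (M i)]

def monomialEquiv (τ : Perm ι) (A : ∀ i, M i ≃ₗ[R] M (τ i)) :
    (∀ i, M i) ≃ₗ[R] ∀ i, M i :=
  (LinearEquiv.piCongrRight A).trans (LinearEquiv.piCongrLeft R M τ)

@[simp]
theorem monomialEquiv_apply_apply (τ : Perm ι) (A : ∀ i, M i ≃ₗ[R] M (τ i)) (u : ∀ i, M i)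
    (i : ι) : monomialEquiv τ A u (τ i) = A i (u i) :=
  Equiv.piCongrLeft_apply_apply _ _ _ _

theorem monomialEquiv_single [DecidableEq ι] (τ : Perm ι) (A : ∀ i, M i ≃ₗ[R] M (τ i))
    (i : ι) (x : M i) :
    monomialEquiv τ A (Pi.single i x) = Pi.single (τ i) (A i x) := by
  ext j
  obtain ⟨j, rfl⟩ := τ.surjective j
  rw [monomialEquiv_apply_apply]
  by_cases h : j = i
  · subst h; simp
  · simp [h, τ.injective.ne h]

theorem hammingDist_monomialEquiv [Fintype ι] [∀ i, DecidableEq (M i)] (τ : Perm ι)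
    (A : ∀ i, M i ≃ₗ[R] M (τ i)) (u v : ∀ i, M i) :
    hammingDist (monomialEquiv τ A u) (monomialEquiv τ A v) = hammingDist u v := by
  rw [← hammingDist_comp_equiv τ]
  simp only [monomialEquiv_apply_apply]
  exact hammingDist_comp (fun i => A i) fun i => (A i).injective

theorem monomialEquiv_injective [DecidableEq ι] [∀ i, Nontrivial (M i)] :
    Injective fun p : Σ τ : Perm ι, ∀ i, M i ≃ₗ[R] M (τ i) => monomialEquiv p.1 p.2 := by
  rintro ⟨τ, A⟩ ⟨τ', A'⟩ (h : monomialEquiv τ A = monomialEquiv τ' A')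
  have happly (i : ι) (x : M i) :
      Pi.single (τ i) (A i x) (τ i) = Pi.single (τ' i) (A' i x) (τ i) := by
    simp only [← monomialEquiv_single]
    exact congr_fun (LinearEquiv.congr_fun h _) _
  obtain rfl : τ = τ' := by
    refine Equiv.ext fun i => by_contra fun hne => ?_
    obtain ⟨x, hx⟩ := exists_ne (0 : M i)
    exact hx (by simpa [Pi.single_eq_of_ne hne] using happly i x)
  refine Sigma.ext rfl (heq_of_eq (funext fun i => LinearEquiv.ext fun x => ?_))
  simpa using happly i x

end Monomial

section Isometry

variable {R ι : Type*} [Semiring R] [Fintype ι] [DecidableEq ι] {M : ι → Type*}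
  [∀ i, AddCommMonoid (M i)] [∀ i, Module R (M i)] [∀ i, DecidableEq (M i)]
  [∀ i, Nontrivial (M i)]

theorem exists_forall_map_single_apply_eq_zero {T : (∀ i, M i) ≃ₗ[R] ∀ i, M i}
    (hT : ∀ u, hammingNorm (T u) = hammingNorm u) (b : ι) :
    ∃ a, ∀ x j, j ≠ a → T (Pi.single b x) j = 0 := by
  have hle (x : M b) :=
    hammingNorm_le_one_iff.1 <| (hT _).trans_le (hammingNorm_single_le_one b x)
  obtain ⟨x₀, hx₀⟩ := exists_ne (0 : M b)
  obtain ⟨a, ha⟩ : ∃ a, T (Pi.single b x₀) a ≠ 0 := by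
    by_contra! h
    exact hx₀ (Pi.single_eq_zero_iff.1 ((T.map_eq_zero_iff).1 (funext h)))
  refine ⟨a, fun x j hja => by_contra fun hj => hja ?_⟩
  have h₁ : T (Pi.single b x) a = 0 := by_contra fun h => hja (hle x j hj a h)
  have h₂ : T (Pi.single b x₀) j = 0 := by_contra fun h => hja (hle x₀ j h a ha)
  -- `T (single b (x₀ + x))` would be nonzero in the two blocks `a ≠ j`
  refine hle (x₀ + x) j ?_ a ?_ <;>
    simpa only [Pi.single_add, map_add, Pi.add_apply, h₁, h₂, add_zero, zero_add]

theorem exists_monomialEquiv_eq {T : (∀ i, M i) ≃ₗ[R] ∀ i, M i}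
    (hT : ∀ u, hammingNorm (T u) = hammingNorm u) :
    ∃ (τ : Perm ι) (A : ∀ i, M i ≃ₗ[R] M (τ i)), monomialEquiv τ A = T := by
  choose τ hτ using exists_forall_map_single_apply_eq_zero hT
  let B (b : ι) : M b →ₗ[R] M (τ b) :=
    (LinearMap.proj (τ b)).comp (T.toLinearMap.comp (LinearMap.single R M b))
  have hsingle (b : ι) (x : M b) : T (Pi.single b x) = Pi.single (τ b) (B b x) := by
    ext j
    by_cases h : j = τ b
    · subst h; simp [B]
    · rw [hτ b x j h, Pi.single_eq_of_ne h]
  have hinj : Injective τ := by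
    intro b b' h
    by_contra hne
    obtain ⟨x, hx⟩ := exists_ne (0 : M b)
    obtain ⟨x', hx'⟩ := exists_ne (0 : M b')
    have hsupp (j : ι) (hj : T (Pi.single b x + Pi.single b' x') j ≠ 0) : j = τ b :=
      by_contra fun hjb => hj <| by
        rw [map_add, Pi.add_apply, hτ b x j hjb, hτ b' x' j (h ▸ hjb), add_zero]
    have hle : hammingNorm (Pi.single b x + Pi.single b' x') ≤ 1 :=
      hT _ ▸ hammingNorm_le_one_of_apply_ne_zero hsupp
    exact hne (hammingNorm_le_one_iff.1 hle b (by simp [hne, hx]) b'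
      (by simp [Ne.symm hne, hx']))
  have happly (u : ∀ i, M i) (b : ι) : T u (τ b) = B b (u b) := by
    refine LinearMap.congr_fun (LinearMap.pi_ext
      (f := (LinearMap.proj (τ b)).comp T.toLinearMap) (g := (B b).comp (LinearMap.proj b))
      fun b' x => ?_) u
    by_cases h : b' = b
    · subst h; simp [hsingle]
    · simp [hsingle, Pi.single_eq_of_ne (hinj.ne (Ne.symm h)), Pi.single_eq_of_ne (Ne.symm h)]
  have hB (b : ι) : Bijective (B b) := by
    refine ⟨fun x x' hxx' => Pi.single_injective b (T.injective ?_), fun y => ?_⟩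
    · rw [hsingle, hsingle, hxx']
    · exact ⟨T.symm (Pi.single (τ b) y) b, by rw [← happly]; simp⟩
  refine ⟨Equiv.ofBijective τ hinj.bijective_of_finite, fun b => .ofBijective (B b) (hB b), ?_⟩
  ext u a
  obtain ⟨b, rfl⟩ := hinj.bijective_of_finite.2 a
  exact (monomialEquiv_apply_apply _ _ u b).trans (happly u b).symm

theorem card_hammingIsometry :
    Nat.card {T : (∀ i, M i) ≃ₗ[R] ∀ i, M i // ∀ u v, hammingDist (T u) (T v) = hammingDist u v} =
      Nat.card (Σ τ : Perm ι, ∀ i, M i ≃ₗ[R] M (τ i)) := by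
  refine (Nat.card_congr (Equiv.ofBijective
    (fun p => ⟨monomialEquiv p.1 p.2, hammingDist_monomialEquiv p.1 p.2⟩) ⟨?_, ?_⟩)).symm
  · exact fun p p' h => monomialEquiv_injective (congr_arg Subtype.val h)
  · rintro ⟨T, hT⟩
    obtain ⟨τ, A, rfl⟩ := exists_monomialEquiv_eq fun u => by simpa using hT u 0
    exact ⟨⟨τ, A⟩, rfl⟩

end Isometry

section Count

variable {F : Type*} [Field F] [Fintype F]

theorem card_linearEquiv_fin (a b : ℕ) :
    Nat.card ((Fin a → F) ≃ₗ[F] (Fin b → F)) =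
      if a = b then ∏ j ∈ range a, (Fintype.card F ^ a - Fintype.card F ^ j) else 0 := by
  split_ifs with h
  · subst h
    rw [← Nat.card_congr (Matrix.GeneralLinearGroup.toLin.trans
        (LinearMap.GeneralLinearGroup.generalLinearEquiv F (Fin a → F))).toEquiv,
      Matrix.card_GL_field, Fin.prod_univ_eq_prod_range (fun j => _ ^ a - _ ^ j)]
  · have : IsEmpty ((Fin a → F) ≃ₗ[F] (Fin b → F)) := ⟨fun e => h (by simpa using e.finrank_eq)⟩
    exact Nat.card_of_isEmpty

theorem card_sigma_linearEquiv_fin {ι : Type*} [Fintype ι] [DecidableEq ι] (k : ι → ℕ) :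
    Nat.card (Σ τ : Perm ι, ∀ i, (Fin (k i) → F) ≃ₗ[F] (Fin (k (τ i)) → F)) =
      #{τ : Perm ι | k ∘ τ = k} *
        ∏ i, ∏ j ∈ range (k i), (Fintype.card F ^ k i - Fintype.card F ^ j) := by
  have (a b : ℕ) : Finite ((Fin a → F) ≃ₗ[F] (Fin b → F)) := .of_injective _ DFunLike.coe_injective
  rw [Nat.card_sigma]
  simp_rw [Nat.card_pi, card_linearEquiv_fin, Fintype.prod_ite_zero]
  rw [sum_ite, sum_const_zero, sum_const, add_zero, smul_eq_mul]
  simp [funext_iff, eq_comm]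

end Count

theorem stmt17_general {F : Type*} [Field F] [Fintype F] [DecidableEq F] {m : ℕ}
    (k : Fin m → ℕ) (hk : ∀ i, 0 < k i) :
    Nat.card {T : (∀ i : Fin m, Fin (k i) → F) ≃ₗ[F] (∀ i : Fin m, Fin (k i) → F) //
        ∀ u v, blockDist (T u) (T v) = blockDist u v} =
      (∏ i : Fin m, ∏ j ∈ Finset.range (k i),
          ((Fintype.card F) ^ (k i) - (Fintype.card F) ^ j)) *
        ∏ c ∈ Finset.image k Finset.univ,
          Nat.factorial (Finset.univ.filter fun i => k i = c).card := by
  have (i : Fin m) : Nontrivial (Fin (k i) → F) :=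
    have := Fin.pos_iff_nonempty.1 (hk i)
    inferInstance
  calc _ = Nat.card (Σ τ : Perm (Fin m), ∀ i, (Fin (k i) → F) ≃ₗ[F] (Fin (k (τ i)) → F)) :=
        card_hammingIsometry
    _ = _ := by
      rw [card_sigma_linearEquiv_fin, mul_comm, ← Fintype.card_subtype,
        DomMulAct.stabilizer_card']
      simp_rw [Fintype.card_subtype]

/-- The number of linear isometries of the error-block space equals
`(∏_i |GL(k_i, F_q)|) · (∏_j m_j!)`, where `|GL(k,F_q)| = ∏_{j<k}(q^k - q^j)` and the
`m_j` are the multiplicities of the distinct values among `k_1,…,k_m`. -/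
theorem stmt17 {F : Type*} [Field F] [Fintype F] [DecidableEq F] {m N : ℕ}
    (k : Fin m → ℕ) (hk : ∀ i, 0 < k i) (hN : ∑ i, k i = N) :
    Nat.card {T : (∀ i : Fin m, Fin (k i) → F) ≃ₗ[F] (∀ i : Fin m, Fin (k i) → F) //
        ∀ u v, blockDist (T u) (T v) = blockDist u v} =
      (∏ i : Fin m, ∏ j ∈ Finset.range (k i),
          ((Fintype.card F) ^ (k i) - (Fintype.card F) ^ j)) *
        ∏ c ∈ Finset.image k Finset.univ,
          Nat.factorial (Finset.univ.filter fun i => k i = c).card :=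
  stmt17_general k hk
end

section
/- Let V = F_q^{k_1} × ... × F_q^{k_n} with the chain poset block metric d(u,v) = max{ i : u_i ≠ v_i }. Then a linear bijection T of V is an isometry of (V, d) if and only if, in block matrix form with respect to the decomposition, T is block upper-triangular with invertible diagonal blocks: T(v_1,...,v_n)_i = A_i(v_i) + L_i(v_{i+1},...,v_n) with A_i ∈ GL(V_i) and L_i linear. -/
section aux

variable {F : Type*} [Field F] [Fintype F] [DecidableEq F] {n : ℕ} {k : Fin n → ℕ}

private lemma cd_sub (u v : ∀ i : Fin n, Fin (k i) → F) :
    chainDist u v = chainDist (u - v) 0 := by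
  unfold chainDist
  congr 1
  apply Finset.filter_congr
  intro i _
  simp [sub_ne_zero]

private lemma cd_le (v : ∀ i : Fin n, Fin (k i) → F) (m : ℕ) :
    chainDist v 0 ≤ m ↔ ∀ i : Fin n, m ≤ (i : ℕ) → v i = 0 := by
  unfold chainDist
  simp only [Finset.sup_le_iff, Finset.mem_filter, Finset.mem_univ, true_and, Pi.zero_apply]
  constructor
  · intro h i hi
    by_contra hv
    have := h i hv
    omega
  · intro h i hv
    by_contra hm
    exact hv (h i (by omega))

end aux

/-- A linear bijection `T` of the chain poset block space is an isometry if and only if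
it is block upper-triangular with invertible diagonal blocks:
`T(v)_i = A_i(v_i) + L_i(v_{i+1},…,v_n)` with `A_i ∈ GL(V_i)` and `L_i` linear,
depending only on the coordinates strictly above `i`. -/
theorem stmt19 {F : Type*} [Field F] [Fintype F] [DecidableEq F] {n : ℕ}
    {k : Fin n → ℕ}
    (T : (∀ i : Fin n, Fin (k i) → F) ≃ₗ[F] (∀ i : Fin n, Fin (k i) → F)) :
    (∀ u v, chainDist (T u) (T v) = chainDist u v) ↔
      ∃ A : ∀ i : Fin n, (Fin (k i) → F) ≃ₗ[F] (Fin (k i) → F),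
      ∃ L : ∀ i : Fin n, (∀ j : Fin n, Fin (k j) → F) →ₗ[F] (Fin (k i) → F),
        (∀ (i : Fin n) (v : ∀ j : Fin n, Fin (k j) → F),
          (∀ j : Fin n, i < j → v j = 0) → L i v = 0) ∧
        (∀ (v : ∀ j : Fin n, Fin (k j) → F) (i : Fin n),
          T v i = A i (v i) + L i v) := by
  constructor
  · intro h
    -- weight preservation
    have hw : ∀ w, chainDist (T w) 0 = chainDist w 0 := by
      intro w
      have := h w 0
      rwa [map_zero] at this
    -- key lemma 1
    have key1 : ∀ (i : Fin n) (v : ∀ j : Fin n, Fin (k j) → F),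
        (∀ j : Fin n, i < j → v j = 0) → T v i = T (Pi.single i (v i)) i := by
      intro i v hv
      set v' := v - Pi.single i (v i) with hv'
      have h1 : chainDist v' 0 ≤ (i : ℕ) := by
        rw [cd_le]
        intro j hj
        rcases eq_or_ne j i with rfl | hne
        · simp [hv']
        · have hij : i < j := by
            have : (i : ℕ) ≠ (j : ℕ) := fun e => hne (Fin.ext e.symm)
            exact Fin.lt_def.mpr (by omega)
          simp [hv', hv j hij, Pi.single_eq_of_ne hne]
      have h2 : chainDist (T v') 0 ≤ (i : ℕ) := by rw [hw]; exact h1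
      have h3 : T v' i = 0 := (cd_le _ _).mp h2 i le_rfl
      have h4 : T v' = T v - T (Pi.single i (v i)) := by rw [hv', map_sub]
      have h5 := congrFun h4 i
      rw [h3] at h5
      have h6 : T v i - T (Pi.single i (v i)) i = 0 := by
        simpa using h5.symm
      exact sub_eq_zero.mp h6
    -- key lemma 2 : injectivity of diagonal blocks
    have key2 : ∀ (i : Fin n) (x : Fin (k i) → F), T (Pi.single i x) i = 0 → x = 0 := by
      intro i x hx
      set s : ∀ j : Fin n, Fin (k j) → F := Pi.single i x with hs
      have hs1 : chainDist s 0 ≤ (i : ℕ) + 1 := by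
        rw [cd_le]
        intro j hj
        have hne : j ≠ i := fun e => by simp [e] at hj
        simp [hs, Pi.single_eq_of_ne hne]
      have hs2 : chainDist (T s) 0 ≤ (i : ℕ) := by
        rw [cd_le]
        intro j hj
        rcases eq_or_ne j i with rfl | hne
        · exact hx
        · have : ((i : ℕ) + 1) ≤ (j : ℕ) := by
            have : (i : ℕ) ≠ (j : ℕ) := fun e => hne (Fin.ext e.symm)
            omega
          have := (cd_le _ _).mp (by rw [hw]; exact hs1) j this
          exact this
      have hs3 : chainDist s 0 ≤ (i : ℕ) := by rw [← hw]; exact hs2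
      have := (cd_le _ _).mp hs3 i le_rfl
      simpa [hs] using this
    -- diagonal blocks as linear maps
    set Amap : ∀ i : Fin n, (Fin (k i) → F) →ₗ[F] (Fin (k i) → F) :=
      fun i => (LinearMap.proj i) ∘ₗ T.toLinearMap ∘ₗ (LinearMap.single F (fun j => Fin (k j) → F) i)
      with hAmap
    have hAinj : ∀ i, Function.Injective (Amap i) := by
      intro i x y hxy
      have : Amap i (x - y) = 0 := by rw [map_sub, hxy, sub_self]
      have hx : T (Pi.single i (x - y)) i = 0 := this
      have := key2 i (x - y) hx
      rwa [sub_eq_zero] at this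
    have hAbij : ∀ i, Function.Bijective (Amap i) := fun i =>
      ⟨hAinj i, (LinearMap.injective_iff_surjective).mp (hAinj i)⟩
    refine ⟨fun i => LinearEquiv.ofBijective (Amap i) (hAbij i),
      fun i => (LinearMap.proj i) ∘ₗ T.toLinearMap -
        (Amap i) ∘ₗ (LinearMap.proj i), ?_, ?_⟩
    · intro i v hv
      have := key1 i v hv
      simp only [LinearMap.sub_apply, LinearMap.comp_apply, LinearMap.proj_apply]
      rw [sub_eq_zero]
      exact this
    · intro v i
      simp only [LinearEquiv.ofBijective_apply, LinearMap.sub_apply, LinearMap.comp_apply,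
        LinearMap.proj_apply, LinearEquiv.coe_coe]
      abel
  · rintro ⟨A, L, hL, hT⟩ u v
    rw [cd_sub (T u), cd_sub u, ← map_sub]
    set w := u - v
    -- weight preservation for w
    apply le_antisymm
    · rw [cd_le]
      intro i hi
      rw [hT w i]
      have hwi : w i = 0 := (cd_le _ _).mp le_rfl i hi
      have hL0 : L i w = 0 := by
        apply hL
        intro j hij
        exact (cd_le _ _).mp le_rfl j (le_trans hi (le_of_lt hij))
      rw [hwi, hL0, map_zero, add_zero]
    · rw [cd_le]
      intro i hi
      -- downward induction
      have claim : ∀ m : ℕ, ∀ j : Fin n, n - (j : ℕ) ≤ m → (i : ℕ) ≤ (j : ℕ) → w j = 0 := by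
        intro m
        induction m with
        | zero => intro j hm _; exact absurd hm (by have := j.isLt; omega)
        | succ m ih =>
          intro j hm hij
          have hhigh : ∀ l : Fin n, j < l → w l = 0 := by
            intro l hl
            have hl' : (j : ℕ) < (l : ℕ) := hl
            exact ih l (by omega) (by omega)
          have hTw0 : T w j = 0 :=
            (cd_le _ _).mp hi j (le_trans hij le_rfl)
          rw [hT w j, hL j w hhigh, add_zero] at hTw0
          have := (A j).injective (a₁ := w j) (a₂ := 0) (by rw [hTw0, map_zero])
          exact this
      exact claim n i (by omega) le_rfl
end
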